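/- arXiv:2510.01923 — 6 statements merged into one kernel-verified Lean document; each statement's English description precedes it below -/
import Mathlib

section
/- Let Φ : ℝ → H be three times continuously differentiable with ‖Φ(s)‖ = 1 for all s and satisfying the gauge condition ⟨Φ(s), Φ'(s)⟩ = 0 for all s. Fix s ∈ ℝ and define the path segment length Δl(Δs) = ∫_s^{s+Δs} ‖Φ'(s')‖ ds'. Then, as Δs → 0⁺, the squared overlap satisfies |⟨Φ(s), Φ(s+Δs)⟩|² = 1 − (Δl(Δs))² + O((Δs)³). -/
open scoped ComplexInnerProductSpace Topology
open Asymptotics Set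

/-- On an interval `Icc a b` with `a < b`, the iterated derivative within the interval of a
globally `C³` function agrees with the global iterated derivative. -/
lemma iteratedDerivWithin_Icc_eq_iteratedDeriv
    {H : Type*} [NormedAddCommGroup H] [NormedSpace ℝ H]
    (Φ : ℝ → H) (hΦ : ContDiff ℝ 3 Φ) {a b : ℝ} (hab : a < b)
    {k : ℕ} (hk : (k : WithTop ℕ∞) ≤ 3) {x : ℝ} (hx : x ∈ Set.Icc a b) :
    iteratedDerivWithin k Φ (Set.Icc a b) x = iteratedDeriv k Φ x := by
  have hΦ' : ContDiff ℝ ((3 : ℕ∞) : WithTop ℕ∞) Φ := by exact_mod_cast hΦ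
  have hT : HasFTaylorSeriesUpTo ((3 : ℕ∞) : WithTop ℕ∞) Φ (ftaylorSeries ℝ Φ) :=
    contDiff_iff_ftaylorSeries.mp hΦ'
  have hTOn : HasFTaylorSeriesUpToOn ((3 : ℕ∞) : WithTop ℕ∞) Φ (ftaylorSeries ℝ Φ)
      (Set.Icc a b) :=
    (hasFTaylorSeriesUpToOn_univ_iff.mpr hT).mono (Set.subset_univ _)
  have h := hTOn.eq_iteratedFDerivWithin_of_uniqueDiffOn
    (m := k) (by exact_mod_cast hk) (uniqueDiffOn_Icc hab) hx
  rw [iteratedDerivWithin_eq_iteratedFDerivWithin, iteratedDeriv_eq_iteratedFDeriv, ← h]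
  rfl

set_option maxHeartbeats 1000000 in
/-- For a three times continuously differentiable family of unit
vectors `Φ : ℝ → H` satisfying the gauge condition `⟪Φ s, Φ' s⟫ = 0`, the squared
overlap with a nearby eigenstate satisfies
`|⟪Φ s, Φ (s+Δs)⟫|² = 1 − (Δl(Δs))² + O((Δs)³)` as `Δs → 0⁺`, where
`Δl(Δs) = ∫_s^{s+Δs} ‖Φ'(s')‖ ds'` is the path segment length. -/
theorem squared_overlap_eq_one_sub_sq_segment_length
    {H : Type*} [NormedAddCommGroup H] [InnerProductSpace ℂ H]
    (Φ : ℝ → H) (hΦ : ContDiff ℝ 3 Φ)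
    (hnorm : ∀ s, ‖Φ s‖ = 1)
    (hgauge : ∀ s, ⟪Φ s, deriv Φ s⟫ = 0)
    (s : ℝ) (Δl : ℝ → ℝ)
    (hΔl : ∀ Δs, Δl Δs = ∫ t in s..(s + Δs), ‖deriv Φ t‖) :
    (fun Δs : ℝ =>
        ‖⟪Φ s, Φ (s + Δs)⟫‖ ^ 2 - (1 - (Δl Δs) ^ 2))
      =O[𝓝[>] (0 : ℝ)] (fun Δs : ℝ => Δs ^ 3) := by
  -- basic differentiability facts
  have hΦ3 : ContDiff ℝ ((2 : ℕ∞) + 1) Φ := by exact_mod_cast hΦ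
  have hd1 : Differentiable ℝ Φ := (contDiff_succ_iff_deriv.mp hΦ3).1
  have hΦ2 : ContDiff ℝ ((1 : ℕ∞) + 1) (deriv Φ) := by
    exact_mod_cast (contDiff_succ_iff_deriv.mp hΦ3).2.2
  have hd2 : Differentiable ℝ (deriv Φ) := (contDiff_succ_iff_deriv.mp hΦ2).1
  have hc2 : Continuous (deriv (deriv Φ)) :=
    ((contDiff_succ_iff_deriv.mp hΦ2).2.2).continuous
  have hc1 : Continuous (deriv Φ) := hd2.continuous
  set L : ℝ := ‖deriv Φ s‖ with hL
  have hL0 : 0 ≤ L := norm_nonneg _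
  -- the key identity `⟪Φ s, Φ'' s⟫ = -L²`
  have hkey : (⟪Φ s, deriv (deriv Φ) s⟫ : ℂ) = (-(L ^ 2) : ℝ) := by
    have h1 : HasDerivAt (fun t => (⟪Φ t, deriv Φ t⟫ : ℂ))
        (⟪Φ s, deriv (deriv Φ) s⟫ + ⟪deriv Φ s, deriv Φ s⟫) s :=
      HasDerivAt.inner ℂ (hd1 s).hasDerivAt (hd2 s).hasDerivAt
    have h2 : HasDerivAt (fun _ : ℝ => (0 : ℂ)) 0 s := hasDerivAt_const _ _
    have h3 : (fun t => (⟪Φ t, deriv Φ t⟫ : ℂ)) = fun _ : ℝ => (0 : ℂ) :=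
      funext fun t => hgauge t
    rw [h3] at h1
    have h4 := h1.unique h2
    have h5 : (⟪deriv Φ s, deriv Φ s⟫ : ℂ) = ((L : ℂ)) ^ 2 := inner_self_eq_norm_sq_to_K _
    push_cast
    linear_combination h4 - h5
  -- bound on the second derivative on `Icc s (s+1)`
  obtain ⟨M2, hM2⟩ := (isCompact_Icc : IsCompact (Icc s (s + 1))).exists_bound_of_continuousOn
    hc2.continuousOn
  have hsmem : s ∈ Icc s (s + 1) := left_mem_Icc.mpr (by linarith)
  have hM2_0 : 0 ≤ M2 := le_trans (norm_nonneg _) (hM2 s hsmem)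
  -- Lipschitz bound for `deriv Φ` on `Icc s (s+1)`
  have hLip : ∀ t ∈ Icc s (s + 1), ‖deriv Φ t - deriv Φ s‖ ≤ M2 * (t - s) := by
    intro t ht
    have h := Convex.norm_image_sub_le_of_norm_deriv_le (f := deriv Φ)
      (fun x _ => hd2 x) (fun x hx => hM2 x hx) (convex_Icc s (s + 1)) hsmem ht
    calc ‖deriv Φ t - deriv Φ s‖ ≤ M2 * ‖t - s‖ := h
      _ = M2 * (t - s) := by
          rw [Real.norm_eq_abs, abs_of_nonneg (by linarith [ht.1])]
  -- Part A : segment length estimate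
  have hA : ∀ Δs ∈ Ioc (0 : ℝ) 1, |Δl Δs - Δs * L| ≤ M2 * Δs ^ 2 := by
    intro Δs hΔ
    have hle : s ≤ s + Δs := by linarith [hΔ.1]
    have hint : IntervalIntegrable (fun t => ‖deriv Φ t‖) MeasureTheory.volume s (s + Δs) :=
      (hc1.norm).intervalIntegrable _ _
    have h0 : Δl Δs - Δs * L = ∫ t in s..(s + Δs), (‖deriv Φ t‖ - L) := by
      rw [hΔl, intervalIntegral.integral_sub hint intervalIntegrable_const,
        intervalIntegral.integral_const]
      simp only [smul_eq_mul]
      ring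
    have hb : ∀ t ∈ Set.uIoc s (s + Δs), ‖‖deriv Φ t‖ - L‖ ≤ M2 * Δs := by
      intro t ht
      rw [Set.uIoc_of_le hle] at ht
      have ht' : t ∈ Icc s (s + 1) := ⟨ht.1.le, by linarith [ht.2, hΔ.2]⟩
      calc ‖‖deriv Φ t‖ - L‖ = |‖deriv Φ t‖ - ‖deriv Φ s‖| := by rw [Real.norm_eq_abs, hL]
        _ ≤ ‖deriv Φ t - deriv Φ s‖ := abs_norm_sub_norm_le _ _
        _ ≤ M2 * (t - s) := hLip t ht'
        _ ≤ M2 * Δs := by nlinarith [ht.2, hM2_0]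
    have h2 := intervalIntegral.norm_integral_le_of_norm_le_const hb
    rw [h0, ← Real.norm_eq_abs]
    calc ‖∫ t in s..(s + Δs), (‖deriv Φ t‖ - L)‖ ≤ M2 * Δs * |s + Δs - s| := h2
      _ = M2 * Δs ^ 2 := by
          rw [show s + Δs - s = Δs by ring, abs_of_pos hΔ.1]; ring
  -- Taylor's theorem with remainder bound
  have hCD : ContDiffOn ℝ ((2 : ℕ) + 1) Φ (Icc s (s + 1)) := by
    exact_mod_cast hΦ.contDiffOn
  obtain ⟨CT, hCT⟩ := exists_taylor_mean_remainder_bound (n := 2)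
    (by linarith : s ≤ s + 1) hCD
  -- value of the Taylor polynomial paired with `Φ s`
  have hs1 : s < s + 1 := by linarith
  have hTay : ∀ Δs : ℝ, (⟪Φ s, taylorWithinEval Φ 2 (Icc s (s + 1)) s (s + Δs)⟫ : ℂ)
      = ((1 - Δs ^ 2 * L ^ 2 / 2 : ℝ) : ℂ) := by
    intro Δs
    rw [taylor_within_apply]
    have e0 : iteratedDerivWithin 0 Φ (Icc s (s + 1)) s = Φ s := by
      rw [iteratedDerivWithin_Icc_eq_iteratedDeriv Φ hΦ hs1 (by norm_num) hsmem,
        iteratedDeriv_zero]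
    have e1 : iteratedDerivWithin 1 Φ (Icc s (s + 1)) s = deriv Φ s := by
      rw [iteratedDerivWithin_Icc_eq_iteratedDeriv Φ hΦ hs1 (by norm_num) hsmem,
        iteratedDeriv_one]
    have e2 : iteratedDerivWithin 2 Φ (Icc s (s + 1)) s = deriv (deriv Φ) s := by
      rw [iteratedDerivWithin_Icc_eq_iteratedDeriv Φ hΦ hs1 (by norm_num) hsmem,
        iteratedDeriv_succ, iteratedDeriv_one]
    rw [Finset.sum_range_succ, Finset.sum_range_succ, Finset.sum_range_one, e0, e1, e2]
    have hsmul : ∀ (r : ℝ) (x : H), (⟪Φ s, r • x⟫ : ℂ) = (r : ℂ) * ⟪Φ s, x⟫ := by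
      intro r x
      rw [RCLike.real_smul_eq_coe_smul (K := ℂ), inner_smul_right]
      norm_cast
    rw [inner_add_right, inner_add_right, hsmul, hsmul, hsmul, hgauge s, hkey]
    all_goals try norm_cast
    have hself : (⟪Φ s, Φ s⟫ : ℂ) = 1 := by
      rw [inner_self_eq_norm_sq_to_K, hnorm s]; norm_num
    rw [hself]
    simp only [Nat.factorial, Nat.cast_ofNat, Nat.cast_one, add_sub_cancel_left]
    push_cast
    ring
  -- Part B : overlap estimate
  have hB : ∀ Δs ∈ Ioc (0 : ℝ) 1,
      ‖(⟪Φ s, Φ (s + Δs)⟫ : ℂ) - ((1 - Δs ^ 2 * L ^ 2 / 2 : ℝ) : ℂ)‖ ≤ CT * Δs ^ 3 := by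
    intro Δs hΔ
    have hmem : s + Δs ∈ Icc s (s + 1) := ⟨by linarith [hΔ.1], by linarith [hΔ.2]⟩
    calc ‖(⟪Φ s, Φ (s + Δs)⟫ : ℂ) - ((1 - Δs ^ 2 * L ^ 2 / 2 : ℝ) : ℂ)‖
        = ‖(⟪Φ s, Φ (s + Δs) - taylorWithinEval Φ 2 (Icc s (s + 1)) s (s + Δs)⟫ : ℂ)‖ := by
          rw [inner_sub_right, hTay]
      _ ≤ ‖Φ s‖ * ‖Φ (s + Δs) - taylorWithinEval Φ 2 (Icc s (s + 1)) s (s + Δs)‖ :=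
          norm_inner_le_norm _ _
      _ ≤ CT * Δs ^ 3 := by
          rw [hnorm s, one_mul]
          have := hCT (s + Δs) hmem
          simpa using this
  -- assemble the final bound
  rw [Asymptotics.isBigO_iff]
  refine ⟨CT * (2 + L ^ 2 / 2) + L ^ 4 / 4 + M2 * (M2 + 2 * L), ?_⟩
  filter_upwards [Ioc_mem_nhdsGT_of_mem (show (0 : ℝ) ∈ Ico (0 : ℝ) 1 by norm_num)]
    with Δs hΔ
  set F : ℝ := ‖(⟪Φ s, Φ (s + Δs)⟫ : ℂ)‖ with hF
  set A : ℝ := 1 - Δs ^ 2 * L ^ 2 / 2 with hA'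
  have hΔ0 : 0 < Δs := hΔ.1
  have hΔ1 : Δs ≤ 1 := hΔ.2
  have hF1 : F ≤ 1 := by
    calc F ≤ ‖Φ s‖ * ‖Φ (s + Δs)‖ := norm_inner_le_norm _ _
      _ = 1 := by rw [hnorm, hnorm]; norm_num
  have hF0 : 0 ≤ F := norm_nonneg _
  have hsq1 : Δs ^ 2 ≤ 1 := by nlinarith
  have hAabs : |A| ≤ 1 + L ^ 2 / 2 := by
    rw [abs_le]; constructor <;> [nlinarith [sq_nonneg Δs, sq_nonneg L, mul_nonneg (sq_nonneg Δs) (sq_nonneg L)]; nlinarith [sq_nonneg Δs, sq_nonneg L, mul_nonneg (sq_nonneg Δs) (sq_nonneg L)]]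
  have hFA : abs (F - abs A) ≤ CT * Δs ^ 3 := by
    have h1 := abs_norm_sub_norm_le (⟪Φ s, Φ (s + Δs)⟫ : ℂ) ((A : ℂ))
    rw [Complex.norm_real, Real.norm_eq_abs] at h1
    exact le_trans h1 (hB Δs hΔ)
  have hCT3 : 0 ≤ CT * Δs ^ 3 := le_trans (abs_nonneg _) hFA
  -- term 1
  have hT1 : |F ^ 2 - A ^ 2| ≤ CT * Δs ^ 3 * (2 + L ^ 2 / 2) := by
    have e : F ^ 2 - A ^ 2 = (F - abs A) * (F + abs A) := by
      rw [← sq_abs A]; ring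
    rw [e, abs_mul]
    have hplus : abs (F + abs A) ≤ 2 + L ^ 2 / 2 := by
      rw [abs_of_nonneg (by positivity)]
      linarith
    exact mul_le_mul hFA hplus (abs_nonneg _) hCT3
  -- term 2
  have hT2 : |A ^ 2 - (1 - Δs ^ 2 * L ^ 2)| ≤ L ^ 4 / 4 * Δs ^ 3 := by
    have e : A ^ 2 - (1 - Δs ^ 2 * L ^ 2) = (Δs ^ 2 * L ^ 2 / 2) ^ 2 := by
      rw [hA']; ring
    rw [e, abs_of_nonneg (by positivity)]
    have h4 : Δs ^ 4 ≤ Δs ^ 3 := by nlinarith [pow_pos hΔ0 3]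
    nlinarith [sq_nonneg L, pow_nonneg hL0 4]
  -- term 3
  have hT3 : |(1 - Δs ^ 2 * L ^ 2) - (1 - Δl Δs ^ 2)| ≤ M2 * (M2 + 2 * L) * Δs ^ 3 := by
    have e : (1 - Δs ^ 2 * L ^ 2) - (1 - Δl Δs ^ 2)
        = (Δl Δs - Δs * L) * (Δl Δs + Δs * L) := by ring
    rw [e, abs_mul]
    have h1 := hA Δs hΔ
    have h2 : |Δl Δs + Δs * L| ≤ M2 * Δs ^ 2 + 2 * Δs * L := by
      have : Δl Δs + Δs * L = (Δl Δs - Δs * L) + 2 * (Δs * L) := by ring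
      rw [this]
      calc |(Δl Δs - Δs * L) + 2 * (Δs * L)| ≤ |Δl Δs - Δs * L| + |2 * (Δs * L)| :=
            abs_add_le _ _
        _ ≤ M2 * Δs ^ 2 + 2 * Δs * L := by
            rw [abs_of_nonneg (by nlinarith [mul_nonneg hΔ0.le hL0] : (0:ℝ) ≤ 2 * (Δs * L))]
            linarith
    calc |Δl Δs - Δs * L| * |Δl Δs + Δs * L|
        ≤ (M2 * Δs ^ 2) * (M2 * Δs ^ 2 + 2 * Δs * L) :=
          mul_le_mul h1 h2 (abs_nonneg _) (mul_nonneg hM2_0 (sq_nonneg Δs))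
      _ ≤ M2 * (M2 + 2 * L) * Δs ^ 3 := by
          have h4 : Δs ^ 4 ≤ Δs ^ 3 := pow_le_pow_of_le_one hΔ0.le hΔ1 (by norm_num)
          have e2 : (M2 * Δs ^ 2) * (M2 * Δs ^ 2 + 2 * Δs * L)
              = M2 ^ 2 * Δs ^ 4 + 2 * M2 * L * Δs ^ 3 := by ring
          have e3 : M2 * (M2 + 2 * L) * Δs ^ 3
              = M2 ^ 2 * Δs ^ 3 + 2 * M2 * L * Δs ^ 3 := by ring
          have h5 := mul_le_mul_of_nonneg_left h4 (sq_nonneg M2)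
          rw [e2, e3]
          linarith
  -- combine
  have hsplit : F ^ 2 - (1 - Δl Δs ^ 2)
      = (F ^ 2 - A ^ 2) + (A ^ 2 - (1 - Δs ^ 2 * L ^ 2))
        + ((1 - Δs ^ 2 * L ^ 2) - (1 - Δl Δs ^ 2)) := by ring
  have htri := abs_add_three (F ^ 2 - A ^ 2) (A ^ 2 - (1 - Δs ^ 2 * L ^ 2))
    ((1 - Δs ^ 2 * L ^ 2) - (1 - Δl Δs ^ 2))
  rw [Real.norm_eq_abs, Real.norm_eq_abs, abs_of_pos (by positivity : (0:ℝ) < Δs ^ 3)]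
  rw [hsplit]
  calc |(F ^ 2 - A ^ 2) + (A ^ 2 - (1 - Δs ^ 2 * L ^ 2))
        + ((1 - Δs ^ 2 * L ^ 2) - (1 - Δl Δs ^ 2))|
      ≤ |F ^ 2 - A ^ 2| + |A ^ 2 - (1 - Δs ^ 2 * L ^ 2)|
        + |(1 - Δs ^ 2 * L ^ 2) - (1 - Δl Δs ^ 2)| := htri
    _ ≤ (CT * (2 + L ^ 2 / 2) + L ^ 4 / 4 + M2 * (M2 + 2 * L)) * Δs ^ 3 := by
        nlinarith [hT1, hT2, hT3]
end

section
/- Let Φ : ℝ → H be twice continuously differentiable with ‖Φ(τ)‖ = 1 for all τ and gauge ⟨Φ(τ), Φ'(τ)⟩ = 0 for all τ. Fix τ and let P : H → H be the projector P x = ⟨Φ(τ), x⟩ Φ(τ), Q = id − P, and let P̈ denote the second derivative at τ of the operator family τ' ↦ (x ↦ ⟨Φ(τ'), x⟩ Φ(τ')). Then the operator norm of the composition Q ∘ P̈ ∘ P equals ‖Q Φ''(τ)‖, the norm of the component of the second derivative of the eigenpath orthogonal to Φ(τ). -/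
open scoped ComplexInnerProductSpace

/- The projector family is `t ↦ rankOne (Φ t) (Φ t)`, and `rankOne` is real-bilinear, so the
Leibniz rule gives `P̈ = rankOne Φ'' Φ + 2 rankOne Φ' Φ' + rankOne Φ Φ''`. Composing a rank-one operator with `P` and
then `Q` gives the rank-one operator `rankOne (Q (P̈ Φ)) Φ`, whose norm is `‖Q (P̈ Φ)‖`; and
`P̈ Φ = Φ'' + ⟪Φ'', Φ⟫ Φ` because `‖Φ‖ = 1` and `⟪Φ', Φ⟫ = 0`, while `Q Φ = 0`. -/

namespace ContinuousLinearMap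

variable {𝕜 E F G : Type*} [NontriviallyNormedField 𝕜]
  [NormedAddCommGroup E] [NormedSpace 𝕜 E] [NormedAddCommGroup F] [NormedSpace 𝕜 F]
  [NormedAddCommGroup G] [NormedSpace 𝕜 G]

theorem deriv_deriv_of_bilinear (B : E →L[𝕜] F →L[𝕜] G) {u : 𝕜 → E} {v : 𝕜 → F} {x : 𝕜}
    (hu : Differentiable 𝕜 u) (hv : Differentiable 𝕜 v)
    (hu' : DifferentiableAt 𝕜 (deriv u) x) (hv' : DifferentiableAt 𝕜 (deriv v) x) :
    deriv (deriv fun t ↦ B (u t) (v t)) x =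
      B (deriv (deriv u) x) (v x) + 2 • B (deriv u x) (deriv v x)
        + B (u x) (deriv (deriv v) x) := by
  have hderiv : deriv (fun t ↦ B (u t) (v t)) = fun t ↦ B (u t) (deriv v t) + B (deriv u t) (v t) :=
    funext fun t ↦ B.deriv_of_bilinear (fun _ ↦ hu t) (fun _ ↦ hv t)
  have h₁ := B.hasDerivAt_of_bilinear (fun _ ↦ (hu x).hasDerivAt) (fun _ ↦ hv'.hasDerivAt)
  have h₂ := B.hasDerivAt_of_bilinear (fun _ ↦ hu'.hasDerivAt) (fun _ ↦ (hv x).hasDerivAt)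
  rw [hderiv, (h₁.fun_add h₂).deriv, two_smul]
  abel

end ContinuousLinearMap

namespace InnerProductSpace

variable {E F : Type*} [NormedAddCommGroup E] [NormedSpace ℂ E]
  [NormedAddCommGroup F] [InnerProductSpace ℂ F]

noncomputable def rankOneReal : E →L[ℝ] F →L[ℝ] F →L[ℂ] E :=
  LinearMap.mkContinuous₂
    (LinearMap.mk₂ ℝ (rankOne ℂ ·) (fun _ _ _ ↦ by simp) (fun _ _ _ ↦ by ext; simp)
      (fun _ _ _ ↦ by simp) (fun c x y ↦ by ext; simp [← Complex.coe_smul]))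
    1 (fun x y ↦ by simp)

@[simp] lemma rankOneReal_apply (x : E) (y : F) : rankOneReal x y = rankOne ℂ x y := rfl

end InnerProductSpace

open InnerProductSpace

/-- Let `Φ : ℝ → H` be twice continuously differentiable with
`‖Φ τ‖ = 1` and gauge `⟪Φ τ, Φ' τ⟫ = 0` for all `τ`. Fix `τ`, let `P` be the rank-one
projector onto `Φ τ`, `Q = id − P`, and let `P̈` be the second derivative at `τ` of the
projector family `τ' ↦ (x ↦ ⟪Φ τ', x⟫ Φ τ')`. Then `‖Q ∘ P̈ ∘ P‖ = ‖Q (Φ'' τ)‖`,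
the norm of the component of `Φ''(τ)` orthogonal to `Φ τ`. -/
theorem opNorm_Q_Pddot_P_eq_norm_Q_Phi_ddot
    {H : Type*} [NormedAddCommGroup H] [InnerProductSpace ℂ H]
    (Φ : ℝ → H) (hΦ : ContDiff ℝ 2 Φ)
    (hnorm : ∀ t, ‖Φ t‖ = 1)
    (hgauge : ∀ t, ⟪Φ t, deriv Φ t⟫ = 0)
    (τ : ℝ)
    (Pfam : ℝ → H →L[ℂ] H)
    (hPfam : ∀ t x, Pfam t x = ⟪Φ t, x⟫ • Φ t)
    (Q : H →L[ℂ] H)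
    (hQ : ∀ x, Q x = x - ⟪Φ τ, x⟫ • Φ τ) :
    ‖Q.comp ((deriv (deriv Pfam) τ).comp (Pfam τ))‖
      = ‖Q (deriv (deriv Φ) τ)‖ := by
  set Φ' := deriv Φ
  set Φ'' := deriv Φ'
  have hP : ∀ t, Pfam t = rankOne ℂ (Φ t) (Φ t) := fun t ↦ ContinuousLinearMap.ext (hPfam t)
  have hPdd : deriv (deriv Pfam) τ =
      rankOne ℂ (Φ'' τ) (Φ τ) + 2 • rankOne ℂ (Φ' τ) (Φ' τ) + rankOne ℂ (Φ τ) (Φ'' τ) := by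
    have hLeibniz := rankOneReal.deriv_deriv_of_bilinear (hΦ.differentiable two_ne_zero)
      (hΦ.differentiable two_ne_zero) (hΦ.differentiable_deriv_two τ)
      (hΦ.differentiable_deriv_two τ)
    simp only [rankOneReal_apply] at hLeibniz
    rwa [funext hP]
  have hunit : ⟪Φ τ, Φ τ⟫ = 1 := inner_self_eq_one_of_norm_eq_one (hnorm τ)
  have hPddΦ : deriv (deriv Pfam) τ (Φ τ) = Φ'' τ + ⟪Φ'' τ, Φ τ⟫ • Φ τ := by
    simp [hPdd, hnorm, inner_eq_zero_symm.mp (hgauge τ)]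
  have hQΦ : Q (Φ τ) = 0 := by rw [hQ, hunit, one_smul, sub_self]
  calc ‖Q.comp ((deriv (deriv Pfam) τ).comp (Pfam τ))‖
      = ‖rankOne ℂ (Q (deriv (deriv Pfam) τ (Φ τ))) (Φ τ)‖ := by
        rw [hP, comp_rankOne, comp_rankOne]
    _ = ‖Q (Φ'' τ)‖ := by
        rw [norm_rankOne, hnorm, mul_one, hPddΦ, map_add, map_smul, hQΦ, smul_zero, add_zero]
end

section
/- Let Φ : ℝ → H be twice continuously differentiable with ‖Φ(τ)‖ = 1 for all τ and gauge ⟨Φ(τ), Φ'(τ)⟩ = 0 for all τ. Fix τ with v(τ) := ‖Φ'(τ)‖ > 0, let Q = id − P where P x = ⟨Φ(τ), x⟩ Φ(τ). Then v is differentiable at τ with v'(τ) = Re⟨Φ'(τ), Φ''(τ)⟩ / v(τ), and the following Pythagorean decomposition holds: ‖Q Φ''(τ)‖² = v'(τ)² + ‖Q Φ''(τ) − (v'(τ)/v(τ)) Φ'(τ)‖². (The second term equals κ(τ)² v(τ)⁴, where κ is the geodesic curvature of the arc-length reparametrization of the path, so that ‖Q Φ̈ P‖ = √(v̇² + κ²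 v⁴).) -/
open scoped ComplexInnerProductSpace

/-! Since `v = √‖Φ'‖²`, its derivative is `Re⟪Φ', Φ''⟫ / v`. The gauge condition makes `Φ'(τ)`
orthogonal to `Φ(τ)`, so `Re⟪Φ', QΦ''⟫ = Re⟪Φ', Φ''⟫ = v v'`: the vector `(v'/v) Φ'` is the real
orthogonal projection of `QΦ''` onto `ℝ Φ'`, of norm `|v'|`, and the decomposition is Pythagoras. -/

section RealInnerProductSpace

variable {F : Type*} [NormedAddCommGroup F] [InnerProductSpace ℝ F]

theorem HasDerivAt.norm {f : ℝ → F} {f' : F} {t : ℝ} (hf : HasDerivAt f f' t)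
    (h0 : f t ≠ 0) : HasDerivAt (fun s => ‖f s‖) (Inner.inner ℝ (f t) f' / ‖f t‖) t := by
  have hsqrt := hf.norm_sq.sqrt (pow_ne_zero 2 (norm_ne_zero_iff.mpr h0))
  simp only [Real.sqrt_sq (norm_nonneg _)] at hsqrt
  convert hsqrt using 1
  field_simp

theorem norm_sq_eq_norm_smul_sq_add_norm_sub_smul_sq {x u : F} {c : ℝ}
    (h : inner ℝ u x = c * ‖u‖ ^ 2) : ‖x‖ ^ 2 = ‖c • u‖ ^ 2 + ‖x - c • u‖ ^ 2 := by
  have horth : inner ℝ (x - c • u) (c • u) = 0 := by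
    rw [inner_sub_left, real_inner_smul_left, real_inner_smul_right, real_inner_smul_right,
      real_inner_comm, h, real_inner_self_eq_norm_sq]
    ring
  have hpyth := norm_add_sq_eq_norm_sq_add_norm_sq_real horth
  rw [sub_add_cancel] at hpyth
  linarith

end RealInnerProductSpace

theorem inner_sub_inner_smul_of_inner_eq_zero {𝕜 E : Type*} [RCLike 𝕜] [NormedAddCommGroup E]
    [InnerProductSpace 𝕜 E] {u y : E} (h : inner 𝕜 u y = 0) (x : E) :
    inner 𝕜 u (x - inner 𝕜 y x • y) = inner 𝕜 u x := by
  rw [inner_sub_right, inner_smul_right, h, mul_zero, sub_zero]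

theorem speed_derivative_and_pythagorean_decomposition_general
    {H : Type*} [NormedAddCommGroup H] [InnerProductSpace ℂ H]
    (Φ : ℝ → H) (hΦ : ContDiff ℝ 2 Φ)
    (hgauge : ∀ t, ⟪Φ t, deriv Φ t⟫ = 0)
    (τ : ℝ)
    (v : ℝ → ℝ) (hv : ∀ t, v t = ‖deriv Φ t‖)
    (hvpos : 0 < v τ)
    (Q : H → H) (hQ : ∀ x, Q x = x - ⟪Φ τ, x⟫ • Φ τ)
    (vd : ℝ)
    (hvd : vd = (⟪deriv Φ τ, deriv (deriv Φ) τ⟫).re / v τ) :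
    HasDerivAt v vd τ ∧
      ‖Q (deriv (deriv Φ) τ)‖ ^ 2
        = vd ^ 2 + ‖Q (deriv (deriv Φ) τ) - (vd / v τ) • deriv Φ τ‖ ^ 2 := by
  let _ : InnerProductSpace ℝ H := InnerProductSpace.complexToReal
  have hΦ'τ : deriv Φ τ ≠ 0 := norm_pos_iff.mp (hv τ ▸ hvpos)
  have hvd' : vd = inner ℝ (deriv Φ τ) (deriv (deriv Φ) τ) / ‖deriv Φ τ‖ := by
    rw [hvd, hv, real_inner_eq_re_inner]
    rfl
  refine ⟨funext hv ▸ hvd' ▸ (hΦ.differentiable_deriv_two τ).hasDerivAt.norm hΦ'τ, ?_⟩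
  have hQ_inner : ⟪deriv Φ τ, Q (deriv (deriv Φ) τ)⟫ = ⟪deriv Φ τ, deriv (deriv Φ) τ⟫ := by
    rw [hQ, inner_sub_inner_smul_of_inner_eq_zero]
    rw [← inner_conj_symm, hgauge, map_zero]
  have hproj_norm : ‖(vd / v τ) • deriv Φ τ‖ ^ 2 = vd ^ 2 := by
    rw [norm_smul, mul_pow, Real.norm_eq_abs, sq_abs, ← hv]
    field_simp
  rw [← hproj_norm]
  apply norm_sq_eq_norm_smul_sq_add_norm_sub_smul_sq
  rw [real_inner_eq_re_inner, hQ_inner, ← real_inner_eq_re_inner, hvd', ← hv]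
  field_simp

/-- Let `Φ : ℝ → H` be twice continuously differentiable with
`‖Φ t‖ = 1` and gauge `⟪Φ t, Φ' t⟫ = 0` for all `t`. Fix `τ` with speed
`v τ = ‖Φ' τ‖ > 0`, and let `Q = id − P` with `P x = ⟪Φ τ, x⟫ Φ τ`. Then `v` is
differentiable at `τ` with derivative `v'(τ) = Re⟪Φ' τ, Φ'' τ⟫ / v τ`, and the
Pythagorean decomposition
`‖Q Φ''(τ)‖² = v'(τ)² + ‖Q Φ''(τ) − (v'(τ)/v(τ)) Φ'(τ)‖²` holds. -/
theorem speed_derivative_and_pythagorean_decomposition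
    {H : Type*} [NormedAddCommGroup H] [InnerProductSpace ℂ H]
    (Φ : ℝ → H) (hΦ : ContDiff ℝ 2 Φ)
    (hnorm : ∀ t, ‖Φ t‖ = 1)
    (hgauge : ∀ t, ⟪Φ t, deriv Φ t⟫ = 0)
    (τ : ℝ)
    (v : ℝ → ℝ) (hv : ∀ t, v t = ‖deriv Φ t‖)
    (hvpos : 0 < v τ)
    (Q : H → H) (hQ : ∀ x, Q x = x - ⟪Φ τ, x⟫ • Φ τ)
    (vd : ℝ)
    (hvd : vd = (⟪deriv Φ τ, deriv (deriv Φ) τ⟫).re / v τ) :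
    HasDerivAt v vd τ ∧
      ‖Q (deriv (deriv Φ) τ)‖ ^ 2
        = vd ^ 2 + ‖Q (deriv (deriv Φ) τ) - (vd / v τ) • deriv Φ τ‖ ^ 2 :=
  speed_derivative_and_pythagorean_decomposition_general Φ hΦ hgauge τ v hv hvpos Q hQ vd hvd
end

section
/- Let N ≥ 2, Δ(s) = √(1 − 4(1 − 1/N) s (1 − s)), and let A(s) be the real symmetric 2×2 matrix with entries A₁₁ = 1 − s − (1−s)/N, A₂₂ = 1 − (1−s)(N−1)/N, A₁₂ = A₂₁ = −(1−s)√(N−1)/N. Let φ : [0,1] → ℝ² be any continuously differentiable family of unit vectors with A(s) φ(s) = ((1 − Δ(s))/2) φ(s) for all s (a ground-state eigenvector path). Then the speed of the eigenpath satisfies ‖φ'(s)‖ = (√(N−1)/N) / Δ(s)² for every s ∈ [0,1]. -/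
/-!
Differentiating `A(s) φ(s) = λ(s) φ(s)` gives `(A - λ) φ' = (λ' - A') φ`, and pairing with `φ`
gives the Hellmann–Feynman identity `λ' = ⟪φ, A' φ⟫`; hence
`‖(A - λ) φ'‖² = ‖A' φ‖² - λ'²`. In dimension two, `φ' ⊥ φ` lies in the other eigenline, with
eigenvalue `tr A - λ`, so the left side is `(tr A - 2λ)² ‖φ'‖² = Δ² ‖φ'‖²`, while `A'` is
traceless, so `‖A' φ‖² = -det A' = (N - 1)/N`. With `λ' = -Δ'/2` and `ΔΔ' = -2(1 - 1/N)(1 - 2s)`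
this leaves `Δ⁴ ‖φ'‖² = (N - 1)/N²`. The endpoints `s = 0, 1` follow by continuity of `φ'`.
-/

open Filter Topology Matrix
open scoped RealInnerProductSpace

section EigenpathDeriv

variable {𝕜 F : Type*} [NontriviallyNormedField 𝕜] [NormedAddCommGroup F] [NormedSpace 𝕜 F]

theorem eigenpath_deriv_eq {T : 𝕜 → F →L[𝕜] F} {T' : F →L[𝕜] F} {φ : 𝕜 → F} {v : F}
    {μ : 𝕜 → 𝕜} {μ' s : 𝕜} (hT : HasDerivAt T T' s) (hφ : HasDerivAt φ v s)
    (hμ : HasDerivAt μ μ' s) (heig : ∀ᶠ t in 𝓝 s, T t (φ t) = μ t • φ t) :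
    T s v + T' (φ s) = μ' • φ s + μ s • v := by
  have hrhs := (hμ.smul hφ).congr_of_eventuallyEq heig
  rw [add_comm, add_comm (μ' • _)]
  exact (hT.clm_apply hφ).unique hrhs

end EigenpathDeriv

section Eigenpath

variable {E : Type*} [NormedAddCommGroup E] [InnerProductSpace ℝ E]

theorem inner_deriv_eq_zero_of_norm_eventually_eq_one {φ : ℝ → E} {v : E} {s : ℝ}
    (hφ : HasDerivAt φ v s) (hunit : ∀ᶠ t in 𝓝 s, ‖φ t‖ = 1) : ⟪φ s, v⟫ = 0 := by
  have hconst : HasDerivAt (‖φ ·‖ ^ 2) 0 s :=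
    (hasDerivAt_const s (1 : ℝ)).congr_of_eventuallyEq (hunit.mono fun t ht => by simp [ht])
  linarith [hφ.norm_sq.unique hconst]

variable {T T' : E →L[ℝ] E} {x v : E} {μ μ' : ℝ}

theorem inner_apply_eq_of_eigenpath_deriv (hT : (T : E →ₗ[ℝ] E).IsSymmetric) (hx : ‖x‖ = 1)
    (hTx : T x = μ • x) (hderiv : T v + T' x = μ' • x + μ • v) : ⟪x, T' x⟫ = μ' := by
  have h := congrArg (⟪x, ·⟫) hderiv
  have hsymm : ⟪x, T v⟫ = μ * ⟪x, v⟫ := by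
    rw [← ContinuousLinearMap.coe_coe T, ← hT, ContinuousLinearMap.coe_coe, hTx,
      real_inner_smul_left]
  simp only [inner_add_right, real_inner_smul_right, real_inner_self_eq_norm_sq, hx, hsymm] at h
  linarith

theorem norm_apply_sub_smul_sq_of_eigenpath_deriv (hT : (T : E →ₗ[ℝ] E).IsSymmetric)
    (hx : ‖x‖ = 1) (hTx : T x = μ • x) (hderiv : T v + T' x = μ' • x + μ • v) :
    ‖T v - μ • v‖ ^ 2 = ‖T' x‖ ^ 2 - μ' ^ 2 := by
  have hHF := inner_apply_eq_of_eigenpath_deriv hT hx hTx hderiv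
  rw [show T v - μ • v = μ' • x - T' x by rw [sub_eq_sub_iff_add_eq_add, hderiv, add_comm],
    norm_sub_sq_real, norm_smul, real_inner_smul_left, hHF, hx, Real.norm_eq_abs, mul_one, sq_abs]
  ring

end Eigenpath

section TwoByTwo

variable {M : Matrix (Fin 2) (Fin 2) ℝ}

theorem EuclideanSpace.norm_sq_fin_two (x : EuclideanSpace ℝ (Fin 2)) :
    ‖x‖ ^ 2 = x 0 ^ 2 + x 1 ^ 2 := by
  simp [EuclideanSpace.norm_sq_eq, Fin.sum_univ_two]

theorem EuclideanSpace.inner_fin_two (x y : EuclideanSpace ℝ (Fin 2)) :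
    ⟪x, y⟫ = x 0 * y 0 + x 1 * y 1 := by
  simp [PiLp.inner_apply, Fin.sum_univ_two, mul_comm]

theorem toEuclideanCLM_fin_two_apply (x : EuclideanSpace ℝ (Fin 2)) :
    toEuclideanCLM (𝕜 := ℝ) M x = !₂[M 0 0 * x 0 + M 0 1 * x 1, M 1 0 * x 0 + M 1 1 * x 1] := by
  ext i; fin_cases i <;> simp [mulVec, dotProduct, Fin.sum_univ_two]

theorem toEuclideanCLM_apply_eq_of_inner_eigenvector_eq_zero (hM : M.IsHermitian)
    {x v : EuclideanSpace ℝ (Fin 2)} {μ : ℝ} (hx : ‖x‖ = 1)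
    (hMx : toEuclideanCLM (𝕜 := ℝ) M x = μ • x) (hv : ⟪x, v⟫ = 0) :
    toEuclideanCLM (𝕜 := ℝ) M v = (M.trace - μ) • v := by
  have hsymm : M 1 0 = M 0 1 := by simpa using congrFun₂ hM 0 1
  rw [toEuclideanCLM_fin_two_apply] at hMx ⊢
  have h0 := congrArg (· 0) hMx
  have h1 := congrArg (· 1) hMx
  simp only [Fin.isValue, cons_val_zero, cons_val_one, cons_val_fin_one, PiLp.smul_apply,
    smul_eq_mul] at h0 h1
  have hx2 : x 0 ^ 2 + x 1 ^ 2 = 1 := by rw [← EuclideanSpace.norm_sq_fin_two, hx, one_pow]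
  rw [EuclideanSpace.inner_fin_two] at hv
  rw [trace_fin_two]
  -- `v = c • (-x 1, x 0)` with `c = x 0 * v 1 - x 1 * v 0`, and `(-x 1, x 0)` spans the
  -- other eigenline.
  ext i; fin_cases i <;>
    simp only [Fin.isValue, Fin.zero_eta, Fin.mk_one, cons_val_zero, cons_val_one, cons_val_fin_one,
      PiLp.smul_apply, smul_eq_mul]
  · linear_combination (x 0 * v 1 - x 1 * v 0) * h1 - (M 0 1 * v 1 - (M 1 1 - μ) * v 0) * hx2
      + (M 0 1 * x 1 - (M 1 1 - μ) * x 0) * hv - x 0 * (x 0 * v 1 - x 1 * v 0) * hsymm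
  · linear_combination -(x 0 * v 1 - x 1 * v 0) * h0 - (M 0 1 * v 0 - (M 0 0 - μ) * v 1) * hx2
      + (M 0 1 * x 0 - (M 0 0 - μ) * x 1) * hv + v 0 * hsymm

-- `‖M x‖² = ⟪x, M² x⟫`, and by Cayley–Hamilton a traceless `M` has `M² = -det M • 1`.
theorem norm_toEuclideanCLM_sq_of_trace_eq_zero (hM : M.IsHermitian) (htr : M.trace = 0)
    (x : EuclideanSpace ℝ (Fin 2)) : ‖toEuclideanCLM (𝕜 := ℝ) M x‖ ^ 2 = -M.det * ‖x‖ ^ 2 := by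
  have hsymm : M 1 0 = M 0 1 := by simpa using congrFun₂ hM 0 1
  have htr' : M 1 1 = -M 0 0 := by rw [trace_fin_two] at htr; linarith
  simp only [EuclideanSpace.norm_sq_fin_two, toEuclideanCLM_fin_two_apply, det_fin_two, hsymm, htr',
    Matrix.cons_val_zero, Matrix.cons_val_one]
  ring

theorem norm_sq_mul_sq_of_eigenpath_deriv {B : Matrix (Fin 2) (Fin 2) ℝ} (hM : M.IsHermitian)
    (hB : B.IsHermitian) (hBtr : B.trace = 0) {x v : EuclideanSpace ℝ (Fin 2)} {μ μ' : ℝ}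
    (hx : ‖x‖ = 1) (hMx : toEuclideanCLM (𝕜 := ℝ) M x = μ • x) (hv : ⟪x, v⟫ = 0)
    (hderiv : toEuclideanCLM (𝕜 := ℝ) M v + toEuclideanCLM (𝕜 := ℝ) B x = μ' • x + μ • v) :
    ‖v‖ ^ 2 * (M.trace - 2 * μ) ^ 2 = -B.det - μ' ^ 2 := by
  have hsymm : (toEuclideanCLM (𝕜 := ℝ) M :
      EuclideanSpace ℝ (Fin 2) →ₗ[ℝ] EuclideanSpace ℝ (Fin 2)).IsSymmetric := by
    rw [coe_toEuclideanCLM_eq_toEuclideanLin]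
    exact isSymmetric_toEuclideanLin_iff.mpr hM
  have h := norm_apply_sub_smul_sq_of_eigenpath_deriv hsymm hx hMx hderiv
  rw [toEuclideanCLM_apply_eq_of_inner_eigenvector_eq_zero hM hx hMx hv, ← sub_smul,
    norm_toEuclideanCLM_sq_of_trace_eq_zero hB hBtr, hx, norm_smul, mul_pow,
    Real.norm_eq_abs, sq_abs] at h
  linear_combination h

end TwoByTwo

noncomputable def groverHamiltonian (n s : ℝ) : Matrix (Fin 2) (Fin 2) ℝ :=
  !![1 - s - (1 - s) / n, -(1 - s) * Real.sqrt (n - 1) / n;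
     -(1 - s) * Real.sqrt (n - 1) / n, 1 - (1 - s) * (n - 1) / n]

-- `|u⟩⟨u| - |w⟩⟨w|` in the basis `(w, w⊥)`.
noncomputable def groverHamiltonianDeriv (n : ℝ) : Matrix (Fin 2) (Fin 2) ℝ :=
  !![1 / n - 1, Real.sqrt (n - 1) / n; Real.sqrt (n - 1) / n, (n - 1) / n]

noncomputable def groverGap (n s : ℝ) : ℝ := Real.sqrt (1 - 4 * (1 - 1 / n) * s * (1 - s))

theorem groverHamiltonian_eq_add_smul (n s : ℝ) :
    groverHamiltonian n s = groverHamiltonian n 0 + s • groverHamiltonianDeriv n := by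
  ext i j; fin_cases i <;> fin_cases j <;>
    simp [groverHamiltonian, groverHamiltonianDeriv] <;> ring

theorem hasDerivAt_toEuclideanCLM_groverHamiltonian (n s : ℝ) :
    HasDerivAt (fun t => toEuclideanCLM (𝕜 := ℝ) (groverHamiltonian n t))
      (toEuclideanCLM (𝕜 := ℝ) (groverHamiltonianDeriv n)) s := by
  have hlin : (fun t => toEuclideanCLM (𝕜 := ℝ) (groverHamiltonian n t)) = fun t =>
      toEuclideanCLM (𝕜 := ℝ) (groverHamiltonian n 0) +
        t • toEuclideanCLM (𝕜 := ℝ) (groverHamiltonianDeriv n) :=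
    funext fun t => by rw [groverHamiltonian_eq_add_smul n t, map_add, map_smul]
  rw [hlin]
  simpa using ((hasDerivAt_id s).smul_const
    (toEuclideanCLM (𝕜 := ℝ) (groverHamiltonianDeriv n))).const_add
    (toEuclideanCLM (𝕜 := ℝ) (groverHamiltonian n 0))

theorem groverHamiltonian_isHermitian (n s : ℝ) : (groverHamiltonian n s).IsHermitian := by
  ext i j; fin_cases i <;> fin_cases j <;> simp [groverHamiltonian]

theorem groverHamiltonianDeriv_isHermitian (n : ℝ) : (groverHamiltonianDeriv n).IsHermitian := by
  ext i j; fin_cases i <;> fin_cases j <;> simp [groverHamiltonianDeriv]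

theorem trace_groverHamiltonian {n : ℝ} (hn : n ≠ 0) (s : ℝ) :
    (groverHamiltonian n s).trace = 1 := by
  rw [groverHamiltonian, trace_fin_two_of]
  field_simp
  ring

theorem trace_groverHamiltonianDeriv {n : ℝ} (hn : n ≠ 0) :
    (groverHamiltonianDeriv n).trace = 0 := by
  rw [groverHamiltonianDeriv, trace_fin_two_of]
  field_simp
  ring

theorem det_groverHamiltonianDeriv {n : ℝ} (hn : 1 ≤ n) :
    (groverHamiltonianDeriv n).det = -((n - 1) / n) := by
  rw [groverHamiltonianDeriv, det_fin_two_of, div_mul_div_comm, Real.mul_self_sqrt (by linarith)]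
  field_simp
  ring

theorem groverGap_radicand_pos {n : ℝ} (hn : 1 ≤ n) (s : ℝ) :
    0 < 1 - 4 * (1 - 1 / n) * s * (1 - s) := by
  have h1 : 0 < 1 / n := by positivity
  have h2 : 1 / n ≤ 1 := by rw [div_le_one₀ (by linarith)]; exact hn
  nlinarith [mul_nonneg (sub_nonneg.mpr h2) (sq_nonneg (2 * s - 1))]

theorem groverGap_pos {n : ℝ} (hn : 1 ≤ n) (s : ℝ) : 0 < groverGap n s :=
  Real.sqrt_pos.mpr (groverGap_radicand_pos hn s)

theorem sq_groverGap {n : ℝ} (hn : 1 ≤ n) (s : ℝ) :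
    groverGap n s ^ 2 = 1 - 4 * (1 - 1 / n) * s * (1 - s) :=
  Real.sq_sqrt (groverGap_radicand_pos hn s).le

theorem continuous_groverGap (n : ℝ) : Continuous (groverGap n) :=
  (by fun_prop : Continuous fun s : ℝ => 1 - 4 * (1 - 1 / n) * s * (1 - s)).sqrt

theorem hasDerivAt_groverGap {n : ℝ} (hn : 1 ≤ n) (s : ℝ) :
    HasDerivAt (groverGap n) (-2 * (1 - 1 / n) * (1 - 2 * s) / groverGap n s) s := by
  have hpoly : HasDerivAt (fun t => 1 - 4 * (1 - 1 / n) * t * (1 - t))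
      (-4 * (1 - 1 / n) * (1 - 2 * s)) s :=
    (((hasDerivAt_id' s).const_mul (4 * (1 - 1 / n))).mul
      ((hasDerivAt_id' s).const_sub 1)).const_sub 1 |>.congr_deriv (by ring)
  exact (hpoly.sqrt (groverGap_radicand_pos hn s).ne').congr_deriv (by rw [groverGap]; ring)

theorem norm_deriv_eq_of_groverEigenpath {n s : ℝ} (hn : 1 ≤ n) {φ : ℝ → EuclideanSpace ℝ (Fin 2)}
    (hφ : DifferentiableAt ℝ φ s) (hunit : ∀ᶠ t in 𝓝 s, ‖φ t‖ = 1)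
    (heig : ∀ᶠ t in 𝓝 s,
      toEuclideanCLM (𝕜 := ℝ) (groverHamiltonian n t) (φ t) = ((1 - groverGap n t) / 2) • φ t) :
    ‖deriv φ s‖ = Real.sqrt (n - 1) / n / groverGap n s ^ 2 := by
  have hn0 : n ≠ 0 := by positivity
  have hμ := ((hasDerivAt_groverGap hn s).const_sub 1).div_const 2
  have hderiv := eigenpath_deriv_eq (hasDerivAt_toEuclideanCLM_groverHamiltonian n s)
    hφ.hasDerivAt hμ heig
  have hspeed := norm_sq_mul_sq_of_eigenpath_deriv (groverHamiltonian_isHermitian n s)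
    (groverHamiltonianDeriv_isHermitian n) (trace_groverHamiltonianDeriv hn0)
    hunit.self_of_nhds heig.self_of_nhds
    (inner_deriv_eq_zero_of_norm_eventually_eq_one hφ.hasDerivAt hunit) hderiv
  rw [trace_groverHamiltonian hn0, det_groverHamiltonianDeriv hn] at hspeed
  have hΔ := groverGap_pos hn s
  have hΔsq := sq_groverGap hn s
  rw [← sq_eq_sq₀ (norm_nonneg _) (by positivity), div_pow, div_pow, Real.sq_sqrt (by linarith)]
  field_simp at hspeed hΔsq ⊢
  linear_combination hspeed + (n - 1) * hΔsq

/-- For `N ≥ 2`, let `A(s)` be the `2×2` matrix of the Grover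
interpolation Hamiltonian on its invariant subspace and
`Δ(s) = √(1 − 4(1 − 1/N)s(1 − s))`. If `φ : [0,1] → ℝ²` is a continuously
differentiable family of unit vectors with `A(s) φ(s) = ((1 − Δ(s))/2) φ(s)` for all
`s ∈ [0,1]` (a ground-state eigenvector path), then the speed of the eigenpath is
`‖φ'(s)‖ = (√(N−1)/N) / Δ(s)²` for every `s ∈ [0,1]`. -/
theorem grover_eigenpath_speed
    (N : ℕ) (hN : 2 ≤ N)
    (Δ : ℝ → ℝ)
    (hΔ : ∀ s, Δ s = Real.sqrt (1 - 4 * (1 - 1 / (N : ℝ)) * s * (1 - s)))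
    (A : ℝ → Matrix (Fin 2) (Fin 2) ℝ)
    (hA : ∀ s, A s =
      !![1 - s - (1 - s) / (N : ℝ), -(1 - s) * Real.sqrt ((N : ℝ) - 1) / (N : ℝ);
         -(1 - s) * Real.sqrt ((N : ℝ) - 1) / (N : ℝ), 1 - (1 - s) * ((N : ℝ) - 1) / (N : ℝ)])
    (φ : ℝ → EuclideanSpace ℝ (Fin 2)) (hφ : ContDiff ℝ 1 φ)
    (hunit : ∀ s ∈ Set.Icc (0 : ℝ) 1, ‖φ s‖ = 1)
    (heig : ∀ s ∈ Set.Icc (0 : ℝ) 1,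
      (A s).mulVec (fun j => φ s j) = fun i => ((1 - Δ s) / 2) * φ s i) :
    ∀ s ∈ Set.Icc (0 : ℝ) 1,
      ‖deriv φ s‖ = (Real.sqrt ((N : ℝ) - 1) / (N : ℝ)) / (Δ s) ^ 2 := by
  have hn : (1 : ℝ) ≤ N := by exact_mod_cast (by omega : 1 ≤ N)
  obtain rfl : A = groverHamiltonian N := funext hA
  obtain rfl : Δ = groverGap N := funext hΔ
  have heig' : ∀ t ∈ Set.Icc (0 : ℝ) 1, toEuclideanCLM (𝕜 := ℝ) (groverHamiltonian N t) (φ t) =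
      ((1 - groverGap N t) / 2) • φ t :=
    fun t ht => WithLp.ofLp_injective (p := 2) (by rw [ofLp_toEuclideanCLM]; exact heig t ht)
  have hinterior : Set.EqOn (‖deriv φ ·‖) (fun t => Real.sqrt (N - 1) / N / groverGap N t ^ 2)
      (Set.Ioo 0 1) := fun t ht =>
    have hIcc : Set.Icc (0 : ℝ) 1 ∈ 𝓝 t := Icc_mem_nhds ht.1 ht.2
    norm_deriv_eq_of_groverEigenpath hn (hφ.differentiable one_ne_zero t)
      (eventually_of_mem hIcc hunit) (eventually_of_mem hIcc heig')
  have hcont : Continuous fun t => Real.sqrt (N - 1) / N / groverGap N t ^ 2 :=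
    continuous_const.div ((continuous_groverGap N).pow 2) fun t =>
      (pow_pos (groverGap_pos hn t) 2).ne'
  rw [← closure_Ioo zero_ne_one]
  exact fun s hs => hinterior.closure (hφ.continuous_deriv le_rfl).norm hcont hs
end

section
/- Let N ≥ 2 and define the Roland–Cerf optimal schedule s_o(τ) = 1/2 + (1/(2√(N−1))) tan((2τ − 1) arctan(√(N−1))) for τ ∈ [0,1], and Δ(s) = √(1 − 4(1 − 1/N) s (1 − s)). Then s_o(0) = 0, s_o(1) = 1, s_o is strictly increasing and differentiable on [0,1], and its derivative satisfies the local adiabatic condition s_o'(τ) = (N arctan(√(N−1))/√(N−1)) · Δ(s_o(τ))² for all τ ∈ [0,1]; in particular s_o'(τ) is proportional to the square of the instantaneous spectral gap. -/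
/-!
Write `r = √(N - 1)`, `a = arctan r` and `θ(τ) = (2τ - 1) a ∈ [-a, a] ⊂ (-π/2, π/2)`, so that
`s_o = 1/2 + tan θ / (2r)`. Then `tan (±a) = ±r` gives the boundary values, and monotonicity of
`tan` on `(-π/2, π/2)` gives strict monotonicity. The two sides of the local adiabatic condition
are both multiples of `1 + tan² θ`: the derivative is `(a / r) (1 + tan² θ)`, while
`Δ(s)² = (1 + (N - 1)(2s - 1)²) / N` becomes `(1 + tan² θ) / N` at `s = s_o(τ)`.
-/

open Real Set

noncomputable def rolandCerfSchedule (r τ : ℝ) : ℝ :=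
  1 / 2 + 1 / (2 * r) * tan ((2 * τ - 1) * arctan r)

section RolandCerfSchedule

variable {r τ : ℝ}

lemma rolandCerfSchedule_zero (hr : r ≠ 0) : rolandCerfSchedule r 0 = 0 := by
  have hθ : (2 * (0 : ℝ) - 1) * arctan r = -arctan r := by ring
  rw [rolandCerfSchedule, hθ, tan_neg, tan_arctan]
  field_simp
  ring

lemma rolandCerfSchedule_one (hr : r ≠ 0) : rolandCerfSchedule r 1 = 1 := by
  have hθ : (2 * (1 : ℝ) - 1) * arctan r = arctan r := by ring
  rw [rolandCerfSchedule, hθ, tan_arctan]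
  field_simp
  ring

lemma mul_arctan_mem_Ioo (r : ℝ) (hτ : τ ∈ Icc (0 : ℝ) 1) :
    (2 * τ - 1) * arctan r ∈ Ioo (-(π / 2)) (π / 2) := by
  have hfactor : |2 * τ - 1| ≤ 1 := abs_le.2 ⟨by linarith [hτ.1], by linarith [hτ.2]⟩
  have harctan : |arctan r| < π / 2 := abs_lt.2 (arctan_mem_Ioo r)
  rw [mem_Ioo, ← abs_lt, abs_mul]
  exact (mul_le_of_le_one_left (abs_nonneg _) hfactor).trans_lt harctan

lemma strictMonoOn_rolandCerfSchedule (hr : 0 < r) :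
    StrictMonoOn (rolandCerfSchedule r) (Icc 0 1) := by
  intro x hx y hy hxy
  have hθ : (2 * x - 1) * arctan r < (2 * y - 1) * arctan r :=
    mul_lt_mul_of_pos_right (by linarith) (arctan_pos.2 hr)
  have htan := strictMonoOn_tan (mul_arctan_mem_Ioo r hx) (mul_arctan_mem_Ioo r hy) hθ
  unfold rolandCerfSchedule
  gcongr

lemma hasDerivAt_rolandCerfSchedule (r : ℝ) (hτ : τ ∈ Icc (0 : ℝ) 1) :
    HasDerivAt (rolandCerfSchedule r)
      (arctan r / r * (1 + tan ((2 * τ - 1) * arctan r) ^ 2)) τ := by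
  have hcos : cos ((2 * τ - 1) * arctan r) ≠ 0 :=
    (cos_pos_of_mem_Ioo (mul_arctan_mem_Ioo r hτ)).ne'
  have hθ : HasDerivAt (fun τ : ℝ => (2 * τ - 1) * arctan r) (2 * arctan r) τ := by
    simpa using (((hasDerivAt_id τ).const_mul 2).sub_const 1).mul_const (arctan r)
  refine (((hasDerivAt_tan hcos).comp τ hθ).const_mul (1 / (2 * r))).const_add (1 / 2)
    |>.congr_deriv ?_
  rw [← inv_one_add_tan_sq hcos]
  field_simp

end RolandCerfSchedule

lemma one_sub_four_mul_mul_one_sub_eq {N s : ℝ} (hN : N ≠ 0) :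
    1 - 4 * (1 - 1 / N) * s * (1 - s) = (1 + (N - 1) * (2 * s - 1) ^ 2) / N := by
  field_simp
  ring

lemma grover_gap_sq_rolandCerfSchedule {N r : ℝ} (hN : N ≠ 0) (hr : r ≠ 0)
    (hr2 : r ^ 2 = N - 1) (τ : ℝ) :
    1 - 4 * (1 - 1 / N) * rolandCerfSchedule r τ * (1 - rolandCerfSchedule r τ)
      = (1 + tan ((2 * τ - 1) * arctan r) ^ 2) / N := by
  rw [one_sub_four_mul_mul_one_sub_eq hN, rolandCerfSchedule, ← hr2]
  field_simp
  ring

/-- For `N ≥ 2`, the Roland–Cerf optimal schedule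
`s_o(τ) = 1/2 + (1/(2√(N−1))) tan((2τ − 1) arctan √(N−1))` satisfies `s_o 0 = 0`,
`s_o 1 = 1`, is strictly increasing and differentiable on `[0,1]`, and its derivative
satisfies the local adiabatic condition
`s_o'(τ) = (N arctan(√(N−1))/√(N−1)) · Δ(s_o(τ))²` with
`Δ(s) = √(1 − 4(1 − 1/N)s(1 − s))`; in particular `s_o'` is proportional to the
square of the instantaneous spectral gap. -/
theorem roland_cerf_schedule_local_adiabatic_condition
    (N : ℕ) (hN : 2 ≤ N)
    (Δ : ℝ → ℝ)
    (hΔ : ∀ s, Δ s = Real.sqrt (1 - 4 * (1 - 1 / (N : ℝ)) * s * (1 - s)))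
    (so : ℝ → ℝ)
    (hso : ∀ τ, so τ = 1 / 2 + (1 / (2 * Real.sqrt ((N : ℝ) - 1)))
      * Real.tan ((2 * τ - 1) * Real.arctan (Real.sqrt ((N : ℝ) - 1)))) :
    so 0 = 0 ∧ so 1 = 1 ∧ StrictMonoOn so (Set.Icc 0 1) ∧
      ∀ τ ∈ Set.Icc (0 : ℝ) 1,
        HasDerivAt so
          (((N : ℝ) * Real.arctan (Real.sqrt ((N : ℝ) - 1)) / Real.sqrt ((N : ℝ) - 1))
            * (Δ (so τ)) ^ 2) τ := by
  have hN' : (2 : ℝ) ≤ N := by exact_mod_cast hN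
  have hr : 0 < √((N : ℝ) - 1) := sqrt_pos.2 (by linarith)
  have hr2 : √((N : ℝ) - 1) ^ 2 = N - 1 := sq_sqrt (by linarith)
  obtain rfl : so = rolandCerfSchedule √((N : ℝ) - 1) := funext hso
  refine ⟨rolandCerfSchedule_zero hr.ne', rolandCerfSchedule_one hr.ne',
    strictMonoOn_rolandCerfSchedule hr, fun τ hτ => ?_⟩
  rw [hΔ, grover_gap_sq_rolandCerfSchedule (by positivity) hr.ne' hr2,
    sq_sqrt (by positivity)]
  convert hasDerivAt_rolandCerfSchedule _ hτ using 1
  field_simp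
end

section
/- Let N ≥ 2. Then ∫₀¹ (√(N−1)/N) / (1 − 4(1 − 1/N) s (1 − s)) ds = arctan(√(N−1)). Consequently, the total length L = ∫₀¹ ‖φ'(s)‖ ds of the ground-state eigenpath of the adiabatic Grover Hamiltonian equals arctan(√(N−1)); in particular L < π/2 for all N, so the path length is bounded independently of N (and of the minimum gap 1/√N). -/
/-!
Completing the square, `1 - 4(1 - 1/N)s(1 - s) = (1 + (N - 1)(2s - 1)²)/N`, so with
`c = √(N - 1)` the integrand is `c / (1 + c²(2s - 1)²)`, the derivative of
`arctan (c(2s - 1)) / 2`. Since `arctan` is odd, the integral over `[0, 1]` is `arctan c`,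
which is below `π/2`.
-/

open Real

theorem hasDerivAt_arctan_mul_two_mul_sub_one_div_two (c s : ℝ) :
    HasDerivAt (fun t => arctan (c * (2 * t - 1)) / 2)
      (c / (1 + c ^ 2 * (2 * s - 1) ^ 2)) s := by
  have hlin : HasDerivAt (fun t : ℝ => c * (2 * t - 1)) (c * 2) s := by
    simpa using (((hasDerivAt_id s).const_mul 2).sub_const 1).const_mul c
  refine (((hasDerivAt_arctan _).comp s hlin).div_const 2).congr_deriv ?_
  have hpos : 0 < 1 + c ^ 2 * (2 * s - 1) ^ 2 := by positivity
  field_simp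

theorem integral_div_one_add_sq_mul_two_mul_sub_one_sq (c : ℝ) :
    ∫ s in (0 : ℝ)..1, c / (1 + c ^ 2 * (2 * s - 1) ^ 2) = arctan c := by
  have hcont : Continuous fun s : ℝ => c / (1 + c ^ 2 * (2 * s - 1) ^ 2) :=
    continuous_const.div (by fun_prop) fun s => by positivity
  rw [intervalIntegral.integral_eq_sub_of_hasDerivAt
    (fun s _ => hasDerivAt_arctan_mul_two_mul_sub_one_div_two c s) (hcont.intervalIntegrable 0 1)]
  norm_num [arctan_neg]
  ring

/-- For `x < 1` both sides vanish, because then `√(x - 1) = 0`. -/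
theorem sqrt_sub_one_div_div_eq (x s : ℝ) :
    (√(x - 1) / x) / (1 - 4 * (1 - 1 / x) * s * (1 - s))
      = √(x - 1) / (1 + √(x - 1) ^ 2 * (2 * s - 1) ^ 2) := by
  rcases lt_or_ge x 1 with hx | hx
  · simp [sqrt_eq_zero'.mpr (by linarith : x - 1 ≤ 0)]
  have hx0 : x ≠ 0 := by positivity
  have hden : 1 - 4 * (1 - 1 / x) * s * (1 - s) = (1 + (x - 1) * (2 * s - 1) ^ 2) / x := by
    field_simp
    ring
  rw [hden, sq_sqrt (by linarith), div_div_div_cancel_right₀ hx0]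

theorem grover_eigenpath_length_general
    (N : ℕ) :
    (∫ s in (0 : ℝ)..1,
        (Real.sqrt ((N : ℝ) - 1) / (N : ℝ)) / (1 - 4 * (1 - 1 / (N : ℝ)) * s * (1 - s)))
      = Real.arctan (Real.sqrt ((N : ℝ) - 1)) ∧
      Real.arctan (Real.sqrt ((N : ℝ) - 1)) < Real.pi / 2 := by
  refine ⟨?_, arctan_lt_pi_div_two _⟩
  simp_rw [sqrt_sub_one_div_div_eq]
  exact integral_div_one_add_sq_mul_two_mul_sub_one_sq _

/-- For `N ≥ 2`,
`∫₀¹ (√(N−1)/N) / (1 − 4(1 − 1/N)s(1 − s)) ds = arctan √(N−1)`.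
Consequently the total length `L` of the ground-state eigenpath of the adiabatic
Grover Hamiltonian equals `arctan √(N−1)`; in particular `L < π/2` for all `N`, so the
path length is bounded independently of `N` (and of the minimum gap `1/√N`). -/
theorem grover_eigenpath_length
    (N : ℕ) (hN : 2 ≤ N) :
    (∫ s in (0 : ℝ)..1,
        (Real.sqrt ((N : ℝ) - 1) / (N : ℝ)) / (1 - 4 * (1 - 1 / (N : ℝ)) * s * (1 - s)))
      = Real.arctan (Real.sqrt ((N : ℝ) - 1)) ∧
      Real.arctan (Real.sqrt ((N : ℝ) - 1)) < Real.pi / 2 :=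
  grover_eigenpath_length_general N
end
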